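/- For every i ∈ {1,…,n}, every t ≥ 0 and every x ∈ ℝ one has the identity: X(t, Z^0(x) + λ̃_i·t) − λ̄_i·t = x + ∫_{Z^0(x)}^{Z^0(x)+λ̃_i·t} (1/N(w̃^0(ξ)) − 1/N(w̄)) dξ + ∫_0^t (u(w̃(τ, Z^0(x) + λ̃_i·t)) − u(w̄)) dτ. -/

import Mathlib

/-!
Because `N λ_i - λ̃_i = M` for every `i`, the integrand defining `X` is `u = M / N` and
`λ̄_i = u(w̄) + λ̃_i / N(w̄)`, so after integrating the constants the identity reduces to
`∫_{Z⁰ x}^{z} dξ / N(w⁰(X⁰ ξ)) = X⁰ z - x` with `z = Z⁰ x + λ̃_i t`. This is the substitution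
`ξ = Z⁰ y`: as `Z⁰` is a primitive of the positive density `N ∘ w⁰`, the push-forward of
Lebesgue measure under `X⁰ = (Z⁰)⁻¹` is `N(w⁰ y) dy`.
-/

open MeasureTheory Filter Set

theorem IsCompact.intervalIntegrable_comp {E : Type*} [TopologicalSpace E] [MeasurableSpace E]
    [OpensMeasurableSpace E] {K : Set E} (hK : IsCompact K) {φ : E → ℝ} (hφ : Continuous φ)
    {g : ℝ → E} (hg : Measurable g) (hgK : ∀ τ, g τ ∈ K) (a b : ℝ) :
    IntervalIntegrable (fun τ => φ (g τ)) volume a b := by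
  obtain ⟨B, hB⟩ := hK.exists_bound_of_continuousOn hφ.continuousOn
  exact intervalIntegrable_const.mono_fun' (hφ.measurable.comp hg).aestronglyMeasurable
    (ae_of_all _ fun τ => hB _ (hgK τ))

theorem IsCompact.intervalIntegrable_comp_coordinatewise {ι : Type*} [Fintype ι]
    {K : Set (ι → ℝ)} (hK : IsCompact K) {φ : (ι → ℝ) → ℝ} (hφ : Continuous φ)
    {v : ℝ → ι → ℝ} (hv : Measurable v) (hvK : ∀ x, v x ∈ K) {s : ι → ℝ → ℝ}
    (hs : ∀ j, Measurable (s j)) (a b : ℝ) :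
    IntervalIntegrable (fun τ => φ fun j => v (s j τ) j) volume a b :=
  (isCompact_univ_pi fun j => hK.image (continuous_apply j)).intervalIntegrable_comp hφ
    (measurable_pi_lambda _ fun j => (measurable_pi_apply j).comp (hv.comp (hs j)))
    (fun τ j _ => ⟨_, hvK (s j τ), rfl⟩) a b

theorem strictMono_intervalIntegral_of_pos {ρ : ℝ → ℝ}
    (hρi : ∀ a b, IntervalIntegrable ρ volume a b) (hρ0 : ∀ x, 0 < ρ x) (a : ℝ) :
    StrictMono fun x => ∫ ξ in a..x, ρ ξ := fun x y hxy => sub_pos.1 <| by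
  rw [intervalIntegral.integral_interval_sub_left (hρi a y) (hρi a x)]
  exact intervalIntegral.intervalIntegral_pos_of_pos_on (hρi x y) (fun ξ _ => hρ0 ξ) hxy

section RichSystem

variable {ι α : Type*} {lam : ι → α → ℝ} {N M : α → ℝ} {tlam : ι → ℝ}

theorem rich_density_pos (hrich : ∀ w i, N w * lam i w - tlam i = M w) {i j : ι}
    (hlt : ∀ w, lam i w < lam j w) {w₀ : α} (hw₀ : 0 < N w₀) (w : α) : 0 < N w := by
  have hconst : ∀ v, N v * (lam j v - lam i v) = tlam j - tlam i := fun v => by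
    linear_combination hrich v j - hrich v i
  refine pos_of_mul_pos_left ?_ (sub_pos.2 (hlt w)).le
  rw [hconst, ← hconst w₀]
  exact mul_pos hw₀ (sub_pos.2 (hlt w₀))

theorem rich_lam_sub_div_eq (hrich : ∀ w i, N w * lam i w - tlam i = M w) (i : ι) {w : α}
    (hw : N w ≠ 0) : lam i w - tlam i / N w = M w / N w := by
  rw [← hrich w i]
  field_simp

end RichSystem

namespace OrderIso

variable (e : ℝ ≃o ℝ) {ρ : ℝ → ℝ}

theorem map_symm_volume_eq_withDensity (hρi : ∀ a b, IntervalIntegrable ρ volume a b)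
    (hρ0 : ∀ x, 0 ≤ ρ x) (he : ∀ a b, e b - e a = ∫ x in a..b, ρ x) :
    volume.map e.symm = volume.withDensity fun x => ENNReal.ofReal (ρ x) := by
  refine Measure.ext_of_Ioc' _ _ (fun a b _ => ?_) (fun a b hab => ?_) <;>
    rw [Measure.map_apply e.symm.continuous.measurable measurableSet_Ioc, e.symm.preimage_Ioc,
      e.symm_symm]
  · exact measure_Ioc_lt_top.ne
  · rw [Real.volume_Ioc, he, intervalIntegral.integral_of_le hab.le,
      ofReal_integral_eq_lintegral_ofReal (hρi a b).1 (ae_of_all _ fun x => hρ0 x),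
      withDensity_apply _ measurableSet_Ioc]

theorem integral_comp_symm (hρi : ∀ a b, IntervalIntegrable ρ volume a b)
    (hρ0 : ∀ x, 0 ≤ ρ x) (he : ∀ a b, e b - e a = ∫ x in a..b, ρ x) (f : ℝ → ℝ) (a b : ℝ) :
    ∫ x in a..b, f (e.symm x) = ∫ y in e.symm a..e.symm b, ρ y * f y := by
  wlog hab : a ≤ b generalizing a b
  · rw [intervalIntegral.integral_symm, this b a (le_of_not_ge hab),
      intervalIntegral.integral_symm, neg_neg]
  have hemb : MeasurableEmbedding e.symm := e.symm.toHomeomorph.measurableEmbedding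
  have hIoc : Ioc a b = e.symm ⁻¹' Ioc (e.symm a) (e.symm b) := by
    rw [e.symm.preimage_Ioc, e.symm_symm, e.apply_symm_apply, e.apply_symm_apply]
  have hρm : AEMeasurable (fun y => ENNReal.ofReal (ρ y))
      (volume.restrict (Ioc (e.symm a) (e.symm b))) :=
    (hρi _ _).1.aestronglyMeasurable.aemeasurable.ennreal_ofReal
  rw [intervalIntegral.integral_of_le hab, intervalIntegral.integral_of_le (e.symm.monotone hab),
    ← hemb.integral_map, hIoc, ← Measure.restrict_map hemb.measurable measurableSet_Ioc,
    e.map_symm_volume_eq_withDensity hρi hρ0 he, restrict_withDensity measurableSet_Ioc,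
    integral_withDensity_eq_integral_toReal_smul₀ hρm (ae_of_all _ fun _ => ENNReal.ofReal_lt_top)]
  refine setIntegral_congr_fun measurableSet_Ioc fun y _ => ?_
  simp [ENNReal.toReal_ofReal (hρ0 y)]

theorem integral_one_div_comp_symm (hρi : ∀ a b, IntervalIntegrable ρ volume a b)
    (hρ0 : ∀ x, 0 < ρ x) (he : ∀ a b, e b - e a = ∫ x in a..b, ρ x) (a b : ℝ) :
    ∫ x in a..b, 1 / ρ (e.symm x) = e.symm b - e.symm a := by
  rw [e.integral_comp_symm hρi (fun x => (hρ0 x).le) he (fun y => 1 / ρ y)]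
  rw [intervalIntegral.integral_congr (g := fun _ => 1) fun y _ => mul_one_div_cancel (hρ0 y).ne']
  simp

end OrderIso

theorem stmt_1
    (n : ℕ) (hn : 2 ≤ n)
    (K : Set (Fin n → ℝ)) (hK : IsCompact K)
    (lam : Fin n → (Fin n → ℝ) → ℝ) (hlam : ∀ i, ContDiff ℝ 1 (lam i))
    (N : (Fin n → ℝ) → ℝ) (hN : ContDiff ℝ 1 N)
    (c C : ℝ) (hc : 0 < c)
    (hNbd : ∀ w ∈ convexHull ℝ K, c ≤ N w ∧ N w ≤ C)
    (M : (Fin n → ℝ) → ℝ) (tlam : Fin n → ℝ)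
    (hrich : ∀ (w : Fin n → ℝ) (i : Fin n), N w * lam i w - tlam i = M w)
    (hstrict : ∀ w : Fin n → ℝ, StrictMono (fun i => lam i w))
    (wbar : Fin n → ℝ) (hwbarK : wbar ∈ K)
    (w0 : ℝ → Fin n → ℝ) (hw0m : Measurable w0) (hw0K : ∀ x, w0 x ∈ K)
    (Z0 X0 : ℝ → ℝ)
    (hZ0 : ∀ x, Z0 x = ∫ ξ in (0:ℝ)..x, N (w0 ξ))
    (hZ0X0 : ∀ z, Z0 (X0 z) = z)
    (wt : ℝ → ℝ → Fin n → ℝ)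
    (hwt : ∀ t z i, wt t z i = w0 (X0 (z - tlam i * t)) i)
    (X : ℝ → ℝ → ℝ)
    (hX : ∀ t z, X t z = X0 z + ∫ τ in (0:ℝ)..t,
        (lam ⟨0, by omega⟩ (wt τ z) - tlam ⟨0, by omega⟩ / N (wt τ z))) :
    ∀ (i : Fin n) (t : ℝ), 0 ≤ t → ∀ x : ℝ,
      X t (Z0 x + tlam i * t) - lam i wbar * t
        = x + (∫ ξ in (Z0 x)..(Z0 x + tlam i * t), (1 / N (w0 (X0 ξ)) - 1 / N wbar))
          + ∫ τ in (0:ℝ)..t,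
              (M (wt τ (Z0 x + tlam i * t)) / N (wt τ (Z0 x + tlam i * t))
                - M wbar / N wbar) := by
  intro i t _ x
  have hNpos : ∀ w, 0 < N w := rich_density_pos hrich
    (fun w => hstrict w (Fin.mk_lt_mk.2 zero_lt_one : (⟨0, by omega⟩ : Fin n) < ⟨1, by omega⟩))
    (hc.trans_le (hNbd wbar (subset_convexHull ℝ K hwbarK)).1)
  have hN0 : ∀ w, N w ≠ 0 := fun w => (hNpos w).ne'
  have hMN : ∀ j w, lam j w - tlam j / N w = M w / N w := fun j w =>
    rich_lam_sub_div_eq hrich j (hN0 w)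
  have hρi := hK.intervalIntegrable_comp hN.continuous hw0m hw0K
  have hZ0sub : ∀ a b, Z0 b - Z0 a = ∫ ξ in a..b, N (w0 ξ) := fun a b => by
    rw [hZ0, hZ0, intervalIntegral.integral_interval_sub_left (hρi 0 b) (hρi 0 a)]
  have hZ0mono : StrictMono Z0 :=
    funext hZ0 ▸ strictMono_intervalIntegral_of_pos hρi (fun _ => hNpos _) 0
  set e := hZ0mono.orderIsoOfRightInverse Z0 X0 hZ0X0
  set z := Z0 x + tlam i * t
  have hspace : ∫ ξ in Z0 x..z, 1 / N (w0 (X0 ξ)) = X0 z - x :=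
    (e.integral_one_div_comp_symm hρi (fun _ => hNpos _) hZ0sub (Z0 x) z).trans
      (congrArg (X0 z - ·) (e.symm_apply_apply x))
  have hspace_int : IntervalIntegrable (fun ξ => 1 / N (w0 (X0 ξ))) volume (Z0 x) z :=
    hK.intervalIntegrable_comp (continuous_const.div hN.continuous hN0)
      (hw0m.comp e.symm.continuous.measurable) (fun _ => hw0K _) _ _
  have htime_int : IntervalIntegrable (fun τ => M (wt τ z) / N (wt τ z)) volume 0 t := by
    simp_rw [← hMN ⟨0, by omega⟩, fun τ => funext (hwt τ z)]
    exact hK.intervalIntegrable_comp_coordinatewise (s := fun j τ => X0 (z - tlam j * τ))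
      ((hlam _).continuous.sub (continuous_const.div hN.continuous hN0))
      hw0m hw0K
      (fun j => e.symm.continuous.measurable.comp ((measurable_id.const_mul _).const_sub _)) 0 t
  simp_rw [hX, hMN, intervalIntegral.integral_sub hspace_int intervalIntegrable_const,
    intervalIntegral.integral_sub htime_int intervalIntegrable_const, hspace,
    intervalIntegral.integral_const, ← hMN i wbar, smul_eq_mul, z]
  field_simp
  ring
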